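/- For all odd n ≥ 7, there exists a 3-SCHGDD of type (n, 1^4): the base blocks {(i,0), (x_r + i, 1), (x_r + y_r + i, 2)} for 1 ≤ r ≤ (n−1)/2 and 0 ≤ i ≤ n−1, where {{x_r, y_r}} is a quasi-skew starter in Z_n, form the base blocks of a 3-SCHGDD of type (n, 1^4) on Z_n × Z_4 with groups {i} × Z_4 and holes Z_n × {j}. -/

import Mathlib

/-- The multiset of all nonzero elements of `ZMod n`. -/
def nonzeroZMod (n : ℕ) : Multiset (ZMod n) :=
  (Multiset.range (n - 1)).map (fun z => ((z + 1 : ℕ) : ZMod n))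

/-- A quasi-skew starter in `Z_n` given by pair functions `x y : Fin ((n−1)/2) → ZMod n`. -/
def IsQuasiSkewStarter (n : ℕ) (x y : Fin ((n - 1) / 2) → ZMod n) : Prop :=
  (Finset.univ.val.map x + Finset.univ.val.map y) = nonzeroZMod n ∧
  (Finset.univ.val.map (fun r => x r + y r) +
    Finset.univ.val.map (fun r => -(x r + y r))) = nonzeroZMod n

/-- Difference multiset `Δ_{ab}` for blocks on `Z_n × Z_4` (groups `{a} × Z_4`,
holes `Z_n × {j}`). -/
def blockDelta (n : ℕ) (B : Multiset (Finset (ZMod n × ZMod 4))) (a b : ZMod n) :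
    Multiset (ZMod 4) :=
  B.bind (fun bl =>
    ((bl.val ×ˢ bl.val).filter (fun p => p.1.1 = a ∧ p.2.1 = b ∧ p.1 ≠ p.2)).map
      (fun p => p.1.2 - p.2.2))

/-- The base blocks `{(i,0), (x_r + i, 1), (x_r + y_r + i, 2)}`, `1 ≤ r ≤ (n−1)/2`,
`0 ≤ i ≤ n−1`. -/
def starterBlocks (n : ℕ) (x y : Fin ((n - 1) / 2) → ZMod n) :
    Multiset (Finset (ZMod n × ZMod 4)) :=
  (Multiset.range n).bind (fun i =>
    Finset.univ.val.map (fun r : Fin ((n - 1) / 2) =>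
      ({((i : ZMod n), (0 : ZMod 4)),
        (x r + (i : ZMod n), (1 : ZMod 4)),
        (x r + y r + (i : ZMod n), (2 : ZMod 4))} : Finset (ZMod n × ZMod 4))))

/-!
Translating a block `B` along `Z_n` in the first coordinate, the pairs of points with first
coordinates `(a, b)` in the orbit of `B` correspond to the ordered pairs of points of `B` whose
first coordinates differ by `d = b - a`; so `Δ_{ab}` of the orbit depends only on `d`. In the base
block `{(0,0), (x,1), (x+y,2)}` the six ordered pairs have first-coordinate differences
`x, y, x+y, -(x+y), -x, -y` and second-coordinate differences `3, 3, 2, 2, 1, 1`. By the starter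
property the `x_r, y_r` hit every nonzero `d` exactly once, and so do the `±(x_r + y_r)`; hence
every nonzero `d` contributes `{1, 2, 3}` and `d = 0` contributes nothing.
-/

namespace Multiset

variable {α β γ : Type*}

lemma map_filter_eq_bind (p : α → Prop) [DecidablePred p] (f : α → β) (s : Multiset α) :
    (s.filter p).map f = s.bind fun a => if p a then {f a} else 0 := by
  induction s using Multiset.induction_on with
  | empty => simp
  | cons a s ih => by_cases h : p a <;> simp [h, ih]

lemma bind_univ_ite_eq [Fintype α] [DecidableEq α] (c : α) (v : Multiset β) :
    ((Finset.univ : Finset α).val.bind fun j => if j = c then v else 0) = v :=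
  (Finset.sum_ite_eq' Finset.univ c fun _ => v).trans (if_pos (Finset.mem_univ c))

lemma bind_ite_eq_count_nsmul [DecidableEq γ] (s : Multiset α) (f : α → γ) (d : γ)
    (v : Multiset β) :
    (s.bind fun r => if f r = d then v else 0) = (s.map f).count d • v := by
  induction s using Multiset.induction_on with
  | empty => simp
  | cons a s ih =>
    rcases eq_or_ne (f a) d with rfl | h
    · simp [ih, add_nsmul, add_comm]
    · simp [h, h.symm, ih]

lemma count_map_neg {G : Type*} [AddGroup G] [DecidableEq G] (s : Multiset α) (f : α → G)
    (d : G) : (s.map fun a => -f a).count d = (s.map f).count (-d) := by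
  simpa [Function.comp_def] using count_map_eq_count' Neg.neg (s.map f) neg_injective (-d)

end Multiset

section

variable {n : ℕ}

lemma map_natCast_range_eq_univ [NeZero n] :
    (Multiset.range n).map (Nat.cast : ℕ → ZMod n) = (Finset.univ : Finset (ZMod n)).val := by
  have hinj : ∀ i ∈ Multiset.range n, ∀ j ∈ Multiset.range n, (i : ZMod n) = j → i = j := by
    intro i hi j hj h
    rw [Multiset.mem_range] at hi hj
    simpa [ZMod.val_natCast_of_lt hi, ZMod.val_natCast_of_lt hj] using congrArg ZMod.val h
  have hcard : (⟨_, (Multiset.nodup_range n).map_on hinj⟩ : Finset (ZMod n)).card =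
      Fintype.card (ZMod n) := by
    simp [ZMod.card]
  exact congrArg Finset.val (Finset.eq_univ_of_card _ hcard)

lemma zero_cons_nonzeroZMod [NeZero n] :
    0 ::ₘ nonzeroZMod n = (Finset.univ : Finset (ZMod n)).val := by
  obtain ⟨m, rfl⟩ := Nat.exists_eq_add_one_of_ne_zero (NeZero.ne n)
  rw [← map_natCast_range_eq_univ, add_comm m 1, Multiset.range_add, nonzeroZMod]
  simp [add_comm]

lemma count_nonzeroZMod [NeZero n] (d : ZMod n) :
    (nonzeroZMod n).count d = if d = 0 then 0 else 1 := by
  have h := congrArg (Multiset.count d) (zero_cons_nonzeroZMod (n := n))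
  rw [Multiset.count_cons, Multiset.count_univ] at h
  split_ifs at h ⊢ <;> omega

def translateBlock (j : ZMod n) (bl : Finset (ZMod n × ZMod 4)) : Finset (ZMod n × ZMod 4) :=
  bl.map (Equiv.addRight ((j, 0) : ZMod n × ZMod 4)).toEmbedding

def orbitDelta (bl : Finset (ZMod n × ZMod 4)) (d : ZMod n) : Multiset (ZMod 4) :=
  ((bl.val ×ˢ bl.val).filter fun p => p.2.1 - p.1.1 = d ∧ p.1 ≠ p.2).map
    fun p => p.1.2 - p.2.2

lemma blockDelta_bind {α : Type*} (s : Multiset α) (f : α → Multiset (Finset (ZMod n × ZMod 4)))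
    (a b : ZMod n) : blockDelta n (s.bind f) a b = s.bind fun i => blockDelta n (f i) a b :=
  Multiset.bind_assoc

lemma blockDelta_orbit [NeZero n] (bl : Finset (ZMod n × ZMod 4)) (a b : ZMod n) :
    blockDelta n ((Finset.univ : Finset (ZMod n)).val.map fun j => translateBlock j bl) a b =
      orbitDelta bl (b - a) := by
  have hprod : ∀ j : ZMod n, (translateBlock j bl).val ×ˢ (translateBlock j bl).val =
      (bl.val ×ˢ bl.val).map (Prod.map (· + ((j, 0) : ZMod n × ZMod 4)) (· + (j, 0))) := by
    intro j
    rw [← Finset.product_val, translateBlock, ← Finset.prodMap_map_product, Finset.map_val,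
      Finset.product_val]
    rfl
  have hcond : ∀ (j : ZMod n) (p : (ZMod n × ZMod 4) × (ZMod n × ZMod 4)),
      (p.1.1 + j = a ∧ p.2.1 + j = b ∧ p.1 + (j, 0) ≠ p.2 + (j, 0)) ↔
        j = a - p.1.1 ∧ p.2.1 - p.1.1 = b - a ∧ p.1 ≠ p.2 := by
    intro j p
    constructor
    · rintro ⟨rfl, rfl, hne⟩
      exact ⟨by abel, by abel, fun h => hne (by rw [h])⟩
    · rintro ⟨rfl, hd, hne⟩
      exact ⟨by abel, by linear_combination hd, fun h => hne (add_right_cancel h)⟩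
  simp only [blockDelta, orbitDelta, Multiset.bind_map, hprod, Multiset.map_filter_eq_bind]
  rw [Multiset.bind_bind]
  refine Multiset.bind_congr fun p _ => ?_
  simp only [Prod.map, Prod.fst_add, Prod.snd_add, add_zero, hcond, ite_and,
    Multiset.bind_univ_ite_eq]

def starterBaseBlock (u v : ZMod n) : Finset (ZMod n × ZMod 4) :=
  {(0, 0), (u, 1), (u + v, 2)}

lemma starterBaseBlock_val (u v : ZMod n) :
    (starterBaseBlock u v).val = {(0, 0), (u, 1), (u + v, 2)} := by
  rw [starterBaseBlock, Finset.insert_val_of_notMem, Finset.insert_val_of_notMem,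
    Finset.singleton_val] <;> simp +decide [Multiset.insert_eq_cons]

lemma card_starterBaseBlock (u v : ZMod n) : (starterBaseBlock u v).card = 3 := by
  rw [← Finset.card_val, starterBaseBlock_val]
  rfl

lemma orbitDelta_starterBaseBlock (u v d : ZMod n) :
    orbitDelta (starterBaseBlock u v) d =
      ((if u = d then {3} else 0) + (if v = d then {3} else 0)) +
      ((if u + v = d then {2} else 0) + (if -(u + v) = d then {2} else 0)) +
      ((if -u = d then {1} else 0) + (if -v = d then {1} else 0)) := by
  have h01 : (0 : ZMod 4) - 1 = 3 := by decide
  have h02 : (0 : ZMod 4) - 2 = 2 := by decide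
  have h12 : (1 : ZMod 4) - 2 = 3 := by decide
  have h21 : (2 : ZMod 4) - 1 = 1 := by decide
  simp only [orbitDelta, starterBaseBlock_val, Multiset.insert_eq_cons, Multiset.cons_product,
    Multiset.product_cons, Multiset.product_singleton, Multiset.map_cons,
    Multiset.map_singleton, Multiset.filter_add, Multiset.filter_cons, Multiset.filter_singleton,
    Multiset.map_add, apply_ite (Multiset.map _), Multiset.map_zero, Multiset.singleton_add]
  simp +decide [h01, h02, h12, h21, sub_add_cancel_left]
  abel

lemma translateBlock_starterBaseBlock (j u v : ZMod n) :
    translateBlock j (starterBaseBlock u v) = {(j, 0), (u + j, 1), (u + v + j, 2)} := by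
  simp [translateBlock, starterBaseBlock, Finset.map_insert]

lemma starterBlocks_eq_bind_orbit [NeZero n] (x y : Fin ((n - 1) / 2) → ZMod n) :
    starterBlocks n x y = Finset.univ.val.bind fun r => (Finset.univ : Finset (ZMod n)).val.map
      fun j => translateBlock j (starterBaseBlock (x r) (y r)) := by
  rw [starterBlocks, ← map_natCast_range_eq_univ, Multiset.bind_map_comm]
  simp [translateBlock_starterBaseBlock]

lemma blockDelta_starterBlocks [NeZero n] (x y : Fin ((n - 1) / 2) → ZMod n) (a b : ZMod n) :
    blockDelta n (starterBlocks n x y) a b =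
      (Finset.univ.val.map x + Finset.univ.val.map y).count (b - a) • {3} +
      (Finset.univ.val.map (fun r => x r + y r) +
        Finset.univ.val.map (fun r => -(x r + y r))).count (b - a) • {2} +
      (Finset.univ.val.map x + Finset.univ.val.map y).count (a - b) • {1} := by
  simp only [starterBlocks_eq_bind_orbit, blockDelta_bind, blockDelta_orbit,
    orbitDelta_starterBaseBlock, Multiset.bind_add, Multiset.bind_ite_eq_count_nsmul,
    Multiset.count_map_neg, Multiset.count_add, add_nsmul, neg_sub]

end

theorem schgdd_of_quasiSkewStarter_general (n : ℕ) (hodd : Odd n)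
    (x y : Fin ((n - 1) / 2) → ZMod n) (hxy : IsQuasiSkewStarter n x y) :
    (∀ bl ∈ starterBlocks n x y, bl.card = 3) ∧
    (∀ a b : ZMod n, a ≠ b →
      blockDelta n (starterBlocks n x y) a b = ({1, 2, 3} : Multiset (ZMod 4))) ∧
    (∀ a : ZMod n, blockDelta n (starterBlocks n x y) a a = 0) := by
  have : NeZero n := ⟨hodd.pos.ne'⟩
  refine ⟨fun bl hbl => ?_, fun a b hab => ?_, fun a => ?_⟩
  · simp only [starterBlocks_eq_bind_orbit, Multiset.mem_bind, Multiset.mem_map] at hbl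
    obtain ⟨r, -, j, -, rfl⟩ := hbl
    rw [translateBlock, Finset.card_map, card_starterBaseBlock]
  · rw [blockDelta_starterBlocks, hxy.1, hxy.2, count_nonzeroZMod, count_nonzeroZMod,
      if_neg (sub_ne_zero.mpr hab.symm), if_neg (sub_ne_zero.mpr hab)]
    decide
  · rw [blockDelta_starterBlocks, sub_self, hxy.1, hxy.2, count_nonzeroZMod, if_pos rfl]
    rfl

/-- For odd `n ≥ 7`, the blocks built from a quasi-skew starter form the base blocks of a
`3`-SCHGDD of type `(n, 1^4)` on `Z_n × Z_4` with groups `{a} × Z_4` and holes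
`Z_n × {j}`: every block has size `3`, `Δ_{ab} = Z_4 \ {0}` for `a ≠ b`, and
`Δ_{aa} = ∅`. -/
theorem schgdd_of_quasiSkewStarter (n : ℕ) (hn : 7 ≤ n) (hodd : Odd n)
    (x y : Fin ((n - 1) / 2) → ZMod n) (hxy : IsQuasiSkewStarter n x y) :
    (∀ bl ∈ starterBlocks n x y, bl.card = 3) ∧
    (∀ a b : ZMod n, a ≠ b →
      blockDelta n (starterBlocks n x y) a b = ({1, 2, 3} : Multiset (ZMod 4))) ∧
    (∀ a : ZMod n, blockDelta n (starterBlocks n x y) a a = 0) :=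
  schgdd_of_quasiSkewStarter_general n hodd x y hxy
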